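/- Let E ⊂ (0,T) be a measurable set of positive Lebesgue measure and let k ∈ (0,T) be a density point of E. Then for any γ > 1 there exists k₁ ∈ (k,T) such that the sequence defined by k_{m+1} − k = γ^{−m}(k₁ − k) satisfies |E ∩ (k_{m+1}, k_m)| ≥ (k_m − k_{m+1})/3 for all m ≥ 1. -/
import Mathlib


open Set Real MeasureTheory Filter

/-- Phung–Wang density point lemma: for a density point `k` of a set `E ⊆ (0,T)` of
positive measure, and any `γ > 1`, there is `k₁ ∈ (k,T)` such that the geometric
sequence `k_m = k + γ^{1−m}(k₁−k)` satisfies `|E ∩ (k_{m+1}, k_m)| ≥ (k_m − k_{m+1})/3`. -/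
theorem density_point_sequence (T : ℝ) (hT : 0 < T) (E : Set ℝ)
    (hE : MeasurableSet E) (hEsub : E ⊆ Ioo 0 T) (hEpos : 0 < volume E)
    (k : ℝ) (hk : k ∈ Ioo 0 T)
    (hdensity : Tendsto (fun r : ℝ => volume (E ∩ Ioo (k - r) (k + r)) / ENNReal.ofReal (2 * r))
      (nhdsWithin 0 (Ioi 0)) (nhds 1)) :
    ∀ γ : ℝ, 1 < γ → ∃ k₁ ∈ Ioo k T, ∀ m : ℕ, 1 ≤ m →
      ENNReal.ofReal ((γ ^ (1 - (m : ℤ)) * (k₁ - k) - γ ^ (-(m : ℤ)) * (k₁ - k)) / 3) ≤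
        volume (E ∩ Ioo (k + γ ^ (-(m : ℤ)) * (k₁ - k)) (k + γ ^ (1 - (m : ℤ)) * (k₁ - k))) := by
  intro γ hγ
  have hγ0 : (0:ℝ) < γ := lt_trans one_pos hγ
  set ε : ℝ := (1 - γ⁻¹) / 3 with hε_def
  have hγinv : γ⁻¹ < 1 := inv_lt_one_of_one_lt₀ hγ
  have hεpos : 0 < ε := by
    have : 0 < 1 - γ⁻¹ := by linarith
    positivity
  have hεlt : 1 - ε < 1 := by linarith
  have hεnn : 0 ≤ 1 - ε := by
    have : γ⁻¹ > 0 := by positivity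
    simp only [hε_def]; linarith
  set c : ENNReal := ENNReal.ofReal (1 - ε) with hc_def
  have hclt : c < 1 := by
    rw [hc_def]
    exact ENNReal.ofReal_lt_one.mpr hεlt
  have hev : ∀ᶠ ρ in nhdsWithin (0:ℝ) (Ioi 0),
      c ≤ volume (E ∩ Ioo (k - ρ) (k + ρ)) / ENNReal.ofReal (2 * ρ) :=
    hdensity.eventually (eventually_ge_nhds hclt)
  obtain ⟨u, hu, hsub⟩ := mem_nhdsGT_iff_exists_Ioo_subset.mp hev
  have hu0 : (0:ℝ) < u := hu
  have hkT : k < T := hk.2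
  set d : ℝ := min (u / 2) ((T - k) / 2) with hd_def
  have hd0 : 0 < d := lt_min (by linarith) (by linarith)
  refine ⟨k + d, ⟨by linarith, by
    have : d ≤ (T - k) / 2 := min_le_right _ _
    linarith⟩, ?_⟩
  intro m hm
  have hdk : k + d - k = d := by ring
  rw [hdk]
  set b : ℝ := γ ^ (1 - (m : ℤ)) * d with hb_def
  set a : ℝ := γ ^ (-(m : ℤ)) * d with ha_def
  have hbpos : 0 < b := mul_pos (zpow_pos hγ0 _) hd0
  have hapos : 0 < a := mul_pos (zpow_pos hγ0 _) hd0
  have hab : a = b * γ⁻¹ := by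
    rw [ha_def, hb_def]
    rw [show (-(m:ℤ)) = (1 - (m:ℤ)) + (-1) by ring, zpow_add₀ (ne_of_gt hγ0)]
    simp [zpow_neg, mul_comm, mul_assoc, mul_left_comm]
  have haltb : a < b := by
    rw [hab]
    nth_rewrite 2 [← mul_one b]
    exact mul_lt_mul_of_pos_left hγinv hbpos
  -- b < u
  have hble : b ≤ d := by
    rw [hb_def]
    nth_rewrite 2 [← one_mul d]
    apply mul_le_mul_of_nonneg_right _ (le_of_lt hd0)
    exact zpow_le_one_of_nonpos₀ (le_of_lt hγ) (by omega)
  have hbu : b < u := lt_of_le_of_lt hble (lt_of_le_of_lt (min_le_left _ _) (by linarith))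
  have hbval := hsub ⟨hbpos, hbu⟩
  simp only [mem_setOf_eq] at hbval
  -- turn division bound into product bound
  have h2b : ENNReal.ofReal (2 * b) ≠ 0 :=
    ne_of_gt (ENNReal.ofReal_pos.mpr (by linarith))
  have h1 : c * ENNReal.ofReal (2 * b) ≤ volume (E ∩ Ioo (k - b) (k + b)) :=
    (ENNReal.le_div_iff_mul_le (Or.inl h2b) (Or.inl ENNReal.ofReal_ne_top)).mp hbval
  have h1' : ENNReal.ofReal ((1 - ε) * (2 * b)) ≤ volume (E ∩ Ioo (k - b) (k + b)) := by
    rw [hc_def, ← ENNReal.ofReal_mul hεnn] at h1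
    exact h1
  -- splitting
  have hsplit : E ∩ Ioo (k - b) (k + b) ⊆ (E ∩ Ioo (k + a) (k + b)) ∪ Ioc (k - b) (k + a) := by
    rintro x ⟨hxE, hx1, hx2⟩
    rcases le_or_gt x (k + a) with h | h
    · exact Or.inr ⟨hx1, h⟩
    · exact Or.inl ⟨hxE, h, hx2⟩
  have h2 : volume (E ∩ Ioo (k - b) (k + b)) ≤
      volume (E ∩ Ioo (k + a) (k + b)) + ENNReal.ofReal (a + b) := by
    refine le_trans (measure_mono hsplit) ?_
    refine le_trans (measure_union_le _ _) ?_
    gcongr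
    rw [Real.volume_Ioc]
    apply le_of_eq
    congr 1
    ring
  have h3 : ENNReal.ofReal ((1 - ε) * (2 * b)) ≤
      volume (E ∩ Ioo (k + a) (k + b)) + ENNReal.ofReal (a + b) := le_trans h1' h2
  have h4 : ENNReal.ofReal ((1 - ε) * (2 * b) - (a + b)) ≤ volume (E ∩ Ioo (k + a) (k + b)) := by
    rw [ENNReal.ofReal_sub _ (by linarith)]
    exact tsub_le_iff_right.mpr h3
  have hkey : (b - a) / 3 = (1 - ε) * (2 * b) - (a + b) := by
    rw [hab, hε_def]
    ring
  calc ENNReal.ofReal ((b - a) / 3) = ENNReal.ofReal ((1 - ε) * (2 * b) - (a + b)) := by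
        rw [hkey]
    _ ≤ volume (E ∩ Ioo (k + a) (k + b)) := h4
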